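/- arXiv:2510.05462 — 3 statements merged into one kernel-verified Lean document; each statement's English description precedes it below -/
import Mathlib

section
/- Let G be a finite graph with vertex set V of size ℓ, having no isolated vertex. Then there exists a subset V₁ ⊆ V with |V₁| ≤ ℓ/2 such that every vertex in V \ V₁ has a neighbour in V₁. -/
/-!
Ore's argument. Take an inclusion-minimal dominating set `D`. Removing a vertex `v ∈ D` destroys
domination, so either `v` itself has no neighbour left in `D` (and then, not being isolated, it
has one outside `D`), or some vertex outside `D` sees `v` as its only neighbour in `D`. Either way
every vertex of `D` has a neighbour in `Dᶜ`, so `Dᶜ` dominates as well, and the smaller of `D` and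
`Dᶜ` has at most half the vertices.
-/

namespace SimpleGraph

variable {V : Type*} (G : SimpleGraph V)

def IsDominating (D : Finset V) : Prop :=
  ∀ v ∉ D, ∃ u ∈ D, G.Adj v u

variable {G}

theorem isDominating_univ [Fintype V] : G.IsDominating Finset.univ :=
  fun v hv => absurd (Finset.mem_univ v) hv

theorem exists_adj_notMem_of_minimal_isDominating [DecidableEq V] {D : Finset V}
    (hD : Minimal G.IsDominating D) (hno : ∀ v, ∃ w, G.Adj v w) {v : V} (hv : v ∈ D) :
    ∃ u ∉ D, G.Adj v u := by
  have hErase : ¬ G.IsDominating (D.erase v) := hD.not_prop_of_lt (Finset.erase_ssubset hv)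
  simp only [IsDominating, not_forall, not_exists, not_and] at hErase
  obtain ⟨u, hu, hNoNbr⟩ := hErase
  by_cases huv : u = v
  · subst huv
    obtain ⟨w, hw⟩ := hno u
    refine ⟨w, fun hwD => hNoNbr w (Finset.mem_erase.mpr ⟨hw.ne', hwD⟩) hw, hw⟩
  · have huD : u ∉ D := fun h => hu (Finset.mem_erase.mpr ⟨huv, h⟩)
    obtain ⟨w, hwD, huw⟩ := hD.prop u huD
    have hwv : w = v := by
      by_contra hwv
      exact hNoNbr w (Finset.mem_erase.mpr ⟨hwv, hwD⟩) huw
    exact ⟨u, huD, hwv ▸ huw.symm⟩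

theorem isDominating_compl_of_minimal [Fintype V] [DecidableEq V] {D : Finset V}
    (hD : Minimal G.IsDominating D) (hno : ∀ v, ∃ w, G.Adj v w) : G.IsDominating Dᶜ := by
  intro v hv
  obtain ⟨u, huD, hvu⟩ := exists_adj_notMem_of_minimal_isDominating hD hno (by simpa using hv)
  exact ⟨u, Finset.mem_compl.mpr huD, hvu⟩

end SimpleGraph

/-- A finite graph with no isolated vertex has a subset `V₁` of at most half the
vertices such that every vertex outside `V₁` has a neighbour in `V₁`. -/
theorem stmt_0 {V : Type*} [Fintype V] (G : SimpleGraph V)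
    (hno : ∀ v : V, ∃ w : V, G.Adj v w) :
    ∃ V₁ : Finset V, 2 * V₁.card ≤ Fintype.card V ∧
      ∀ v : V, v ∉ V₁ → ∃ u ∈ V₁, G.Adj v u := by
  classical
  obtain ⟨D, hD⟩ :=
    exists_minimal_of_wellFoundedLT G.IsDominating ⟨_, SimpleGraph.isDominating_univ⟩
  have hDc := SimpleGraph.isDominating_compl_of_minimal hD hno
  have hCard := D.card_add_card_compl
  by_cases hle : D.card ≤ Dᶜ.card
  · exact ⟨D, by omega, hD.prop⟩
  · exact ⟨Dᶜ, by omega, hDc⟩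
end

section
/- Call a sequence of integers (z_n) eventually Zsigmondy if there is N₀ ≥ 1 such that for all n ≥ N₀, z_n has a primitive prime divisor, i.e., a prime dividing z_n that divides no z_m with m < n; assume moreover z_n ≠ ±1 for n ≥ N₀. Let Γ ⊆ ℤ be the multiplicative semigroup generated (with inverses in ℚ) by r nonzero integers, and let Γ̄ = {z ∈ ℤ : z^m ∈ Γ for some m ∈ ℕ, m ≥ 1} be its division semigroup. Then the number of indices n with z_n ∈ Γ̄ is at most N₀ + r. -/
/-!
If `z n ∈ Γ̄`, say `z n ^ m = ∏ j, g j ^ k j`, then taking `p`-adic valuations gives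
`m * v_p (z n) = ∑ j, k j * v_p (g j)` for every prime `p`: the functional
`k ↦ ∑ j, k j * v_p (g j)` on `ℚ^r` detects `v_p (z n)`. For `n ≥ N₀` take `p` a primitive
prime divisor of `z n`: its functional is nonzero on the exponent vector of `z n` and vanishes
on those of all earlier terms. Such a triangular system of exponent vectors is linearly
independent in `ℚ^r`, so at most `r` indices `n ≥ N₀` have `z n ∈ Γ̄`.
-/

theorem linearIndependent_of_triangular {K V ι : Type*} [Field K] [AddCommGroup V]
    [Module K V] [LinearOrder ι] (x : ι → V) (φ : ι → V →ₗ[K] K)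
    (hdiag : ∀ i, φ i (x i) ≠ 0) (hlow : ∀ i j, j < i → φ i (x j) = 0) :
    LinearIndependent K x := by
  classical
  rw [linearIndependent_iff']
  intro s c hsum i hi
  by_contra hci
  obtain ⟨i₀, hi₀, hmax⟩ :=
    (s.filter (c · ≠ 0)).exists_max_image id ⟨i, Finset.mem_filter.2 ⟨hi, hci⟩⟩
  rw [Finset.mem_filter] at hi₀
  have hsingle : ∑ j ∈ s, c j * φ i₀ (x j) = c i₀ * φ i₀ (x i₀) := by
    refine Finset.sum_eq_single_of_mem i₀ hi₀.1 fun j hj hne => ?_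
    by_cases hcj : c j = 0
    · rw [hcj, zero_mul]
    · have hlt : j < i₀ := (hmax j (Finset.mem_filter.2 ⟨hj, hcj⟩)).lt_of_ne hne
      rw [hlow i₀ j hlt, mul_zero]
  have hzero := congrArg (φ i₀) hsum
  simp only [map_sum, map_smul, smul_eq_mul, map_zero, hsingle] at hzero
  exact mul_ne_zero hi₀.2 (hdiag i₀) hzero

theorem padicValRat_prod {p : ℕ} [Fact p.Prime] {ι : Type*} (s : Finset ι) {f : ι → ℚ}
    (hf : ∀ i ∈ s, f i ≠ 0) :
    padicValRat p (∏ i ∈ s, f i) = ∑ i ∈ s, padicValRat p (f i) := by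
  classical
  induction s using Finset.induction_on with
  | empty => simp
  | insert a s ha ih =>
    rw [Finset.forall_mem_insert] at hf
    rw [Finset.prod_insert ha, Finset.sum_insert ha,
      padicValRat.mul hf.1 (Finset.prod_ne_zero_iff.2 hf.2), ih hf.2]

theorem padicValRat_eq_of_pow_eq_prod_zpow {p : ℕ} [Fact p.Prime] {ι : Type*} [Fintype ι]
    {x : ℚ} {m : ℕ} {g : ι → ℚ} (hg : ∀ j, g j ≠ 0) {k : ι → ℤ}
    (h : x ^ m = ∏ j, g j ^ k j) :
    m * padicValRat p x = ∑ j, k j * padicValRat p (g j) := by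
  rw [← padicValRat.pow, h, padicValRat_prod _ fun j _ => zpow_ne_zero _ (hg j)]
  simp only [padicValRat.zpow]

def IsPrimitivePrimeDivisor (z : ℕ → ℤ) (n p : ℕ) : Prop :=
  p.Prime ∧ (p : ℤ) ∣ z n ∧ ∀ m, m < n → ¬ (p : ℤ) ∣ z m

namespace IsPrimitivePrimeDivisor

variable {z : ℕ → ℤ} {n p : ℕ}

theorem padicValInt_ne_zero (hp : IsPrimitivePrimeDivisor z n p) (hz : z n ≠ 0) :
    padicValInt p (z n) ≠ 0 := by
  rw [Ne, padicValInt.eq_zero_iff, not_or, not_or, not_not]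
  exact ⟨hp.1.ne_one, hz, hp.2.1⟩

theorem padicValInt_eq_zero (hp : IsPrimitivePrimeDivisor z n p) {m : ℕ} (hm : m < n) :
    padicValInt p (z m) = 0 :=
  padicValInt.eq_zero_of_not_dvd (hp.2.2 m hm)

end IsPrimitivePrimeDivisor

def divisionClosure {ι : Type*} [Fintype ι] (g : ι → ℤ) : Set ℤ :=
  {x | ∃ m : ℕ, 1 ≤ m ∧ ∃ k : ι → ℤ, (x : ℚ) ^ m = ∏ j, (g j : ℚ) ^ k j}

theorem ncard_le_card_of_forall_mem_divisionClosure {ι : Type*} [Fintype ι] {g : ι → ℤ}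
    (hg : ∀ j, g j ≠ 0) {z : ℕ → ℤ} {T : Set ℕ} (hz : ∀ n ∈ T, z n ≠ 0)
    (hprim : ∀ n ∈ T, ∃ p, IsPrimitivePrimeDivisor z n p)
    (hT : ∀ n ∈ T, z n ∈ divisionClosure g) :
    T.ncard ≤ Fintype.card ι := by
  choose! m hm k hk using hT
  choose! p hp using hprim
  let x : T → ι → ℚ := fun n j => k n j
  let φ : T → (ι → ℚ) →ₗ[ℚ] ℚ := fun n =>
    Fintype.linearCombination ℚ fun j => (padicValRat (p n) (g j) : ℚ)
  have hφ : ∀ n n' : T, φ n (x n') = m n' * padicValInt (p n) (z n') := by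
    intro n n'
    have : Fact (p n).Prime := ⟨(hp n n.2).1⟩
    have hval := padicValRat_eq_of_pow_eq_prod_zpow (p := p n)
      (fun j => Int.cast_ne_zero.2 (hg j)) (hk n' n'.2)
    rw [padicValRat.of_int] at hval
    simp only [φ, x, Fintype.linearCombination_apply, smul_eq_mul]
    exact_mod_cast hval.symm
  have hli : LinearIndependent ℚ x := by
    refine linearIndependent_of_triangular x φ (fun n => ?_) fun n n' hlt => ?_
    · rw [hφ]
      have hm0 : (m n : ℚ) ≠ 0 := Nat.cast_ne_zero.2 (Nat.one_le_iff_ne_zero.1 (hm n n.2))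
      exact mul_ne_zero hm0 (Nat.cast_ne_zero.2 ((hp n n.2).padicValInt_ne_zero (hz n n.2)))
    · rw [hφ, (hp n n.2).padicValInt_eq_zero hlt, Nat.cast_zero, mul_zero]
  have := hli.finite
  let _ := Fintype.ofFinite T
  rw [← Nat.card_coe_set_eq, Nat.card_eq_fintype_card]
  simpa using hli.fintype_card_le_finrank

theorem Set.ncard_le_add_of_ncard_inter_Ici_le {S : Set ℕ} {N r : ℕ}
    (h : (S ∩ Set.Ici N).ncard ≤ r) : S.ncard ≤ N + r :=
  calc S.ncard = ((S ∩ Set.Iio N) ∪ (S ∩ Set.Ici N)).ncard := by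
        rw [← Set.inter_union_distrib_left, Set.Iio_union_Ici, Set.inter_univ]
    _ ≤ (S ∩ Set.Iio N).ncard + (S ∩ Set.Ici N).ncard := Set.ncard_union_le _ _
    _ ≤ N + r := by
        gcongr
        calc (S ∩ Set.Iio N).ncard ≤ (Set.Iio N).ncard :=
              Set.ncard_le_ncard Set.inter_subset_right (Set.finite_Iio N)
          _ = N := Set.ncard_Iio_nat N

theorem stmt_5_general (z : ℕ → ℤ) (hz : ∀ n, z n ≠ 0) (N₀ : ℕ)
    (hZsig : ∀ n, N₀ ≤ n → z n ≠ 1 ∧ z n ≠ -1 ∧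
      ∃ p : ℕ, p.Prime ∧ (p : ℤ) ∣ z n ∧ ∀ m, m < n → ¬ (p : ℤ) ∣ z m)
    (r : ℕ) (g : Fin r → ℤ) (hg : ∀ j, g j ≠ 0) :
    {n : ℕ | ∃ m : ℕ, 1 ≤ m ∧ ∃ k : Fin r → ℤ,
        ((z n : ℚ)) ^ m = ∏ j, (g j : ℚ) ^ (k j)}.ncard ≤ N₀ + r := by
  refine Set.ncard_le_add_of_ncard_inter_Ici_le ?_
  simpa using ncard_le_card_of_forall_mem_divisionClosure (z := z) hg (fun n _ => hz n)
    (fun n hn => (hZsig n hn.2).2.2) (fun n hn => hn.1)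

/-- If `(z n)` is a sequence of nonzero integers which is eventually Zsigmondy
(from index `N₀` on, each `z n` is not `±1` and has a primitive prime divisor),
and `Γ̄` is the division semigroup of the group generated by `r` nonzero integers
`g 1, …, g r`, then at most `N₀ + r` indices `n` satisfy `z n ∈ Γ̄`. -/
theorem stmt_5 (z : ℕ → ℤ) (hz : ∀ n, z n ≠ 0) (N₀ : ℕ) (hN₀ : 1 ≤ N₀)
    (hZsig : ∀ n, N₀ ≤ n → z n ≠ 1 ∧ z n ≠ -1 ∧
      ∃ p : ℕ, p.Prime ∧ (p : ℤ) ∣ z n ∧ ∀ m, m < n → ¬ (p : ℤ) ∣ z m)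
    (r : ℕ) (g : Fin r → ℤ) (hg : ∀ j, g j ≠ 0) :
    {n : ℕ | ∃ m : ℕ, 1 ≤ m ∧ ∃ k : Fin r → ℤ,
        ((z n : ℚ)) ^ m = ∏ j, (g j : ℚ) ^ (k j)}.ncard ≤ N₀ + r :=
  stmt_5_general z hz N₀ hZsig r g hg
end

section
/- Let a, b ∈ ℤ with b ≠ 0 and let p^k be a prime power. The number of residues y modulo p^k satisfying y² ≡ b (mod p^k) is bounded by a constant depending only on b (indeed, at most 2·p^{ν_p(4b)} ≤ 8|b|). -/
/-!
Two square roots `y, z` of `b` modulo `p^k` satisfy `p^k ∣ (y - z)(y + z)`. Let `w = v_p(4b)`.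
If `w < k`, then `p^(⌊w/2⌋+1)` cannot divide both factors: it would divide `2y`, hence
`4y² - 4(y² - b) = 4b`. So `p^(k - ⌊w/2⌋)` divides `y - z` or `y + z`, i.e. all square roots lie in
the two fibres over `±z` of the reduction modulo `p^(k - ⌊w/2⌋)`, each of size `p^⌊w/2⌋`. This gives
at most `2p^⌊w/2⌋ ≤ 2 · 4|b|` solutions. If `k ≤ w`, there are only `p^k ≤ p^w ≤ 4|b|` residues.
-/

theorem Prime.pow_dvd_of_pow_dvd_mul_of_not_pow_dvd {M : Type*} [CommMonoidWithZero M]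
    [IsCancelMulZero M] {p a b : M} (hp : Prime p) {k h : ℕ} (hab : p ^ k ∣ a * b)
    (ha : ¬p ^ (h + 1) ∣ a) : p ^ (k - h) ∣ b := by
  rw [pow_dvd_iff_le_emultiplicity, emultiplicity_mul hp] at hab
  rw [pow_dvd_iff_le_emultiplicity, not_le] at ha
  rw [pow_dvd_iff_le_emultiplicity]
  lift emultiplicity p a to ℕ using (ha.trans (ENat.natCast_lt_top _)).ne with i
  generalize emultiplicity p b = j at hab ⊢
  cases j with
  | top => exact le_top
  | coe j => norm_cast at hab ha ⊢; omega

theorem pow_dvd_sub_or_pow_dvd_add_of_sq_sub_dvd {R : Type*} [CommRing R] [IsDomain R]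
    {p b y z : R} (hp : Prime p) {k w : ℕ} (hb : ¬p ^ (w + 1) ∣ 4 * b) (hwk : w < k)
    (hy : p ^ k ∣ y ^ 2 - b) (hz : p ^ k ∣ z ^ 2 - b) :
    p ^ (k - w / 2) ∣ y - z ∨ p ^ (k - w / 2) ∣ y + z := by
  have hprod : p ^ k ∣ (y - z) * (y + z) := by
    convert dvd_sub hy hz using 1; ring
  by_cases hboth : p ^ (w / 2 + 1) ∣ y - z ∧ p ^ (w / 2 + 1) ∣ y + z
  · have h2y : p ^ (w / 2 + 1) ∣ 2 * y := by
      convert dvd_add hboth.1 hboth.2 using 1; ring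
    have h4y : p ^ (w + 1) ∣ 4 * y ^ 2 :=
      calc p ^ (w + 1) ∣ (p ^ (w / 2 + 1)) ^ 2 := by rw [← pow_mul]; exact pow_dvd_pow p (by omega)
        _ ∣ (2 * y) ^ 2 := pow_dvd_pow_of_dvd h2y 2
        _ = 4 * y ^ 2 := by ring
    have h4d : p ^ (w + 1) ∣ 4 * (y ^ 2 - b) :=
      (pow_dvd_pow p hwk).trans (dvd_mul_of_dvd_right hy 4)
    exact absurd (by convert dvd_sub h4y h4d using 1; ring) hb
  · rcases not_and_or.mp hboth with h | h
    · exact .inr (hp.pow_dvd_of_pow_dvd_mul_of_not_pow_dvd hprod h)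
    · exact .inl (hp.pow_dvd_of_pow_dvd_mul_of_not_pow_dvd (mul_comm (y - z) _ ▸ hprod) h)

theorem AddMonoidHom.card_fiber_mul_card_eq {G H : Type*} [AddGroup G] [AddGroup H] {f : G →+ H}
    (hf : Function.Surjective f) (c : H) : Nat.card (f ⁻¹' {c}) * Nat.card H = Nat.card G := by
  rw [Nat.card_congr (f.fiberEquivKerOfSurjective hf c),
    ← Nat.card_congr (QuotientAddGroup.quotientKerEquivOfSurjective f hf).toEquiv, mul_comm,
    ← AddSubgroup.card_eq_card_quotient_mul_card_addSubgroup]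

theorem ZMod.ncard_cast_fiber_mul {m n : ℕ} (h : m ∣ n) (c : ZMod m) :
    {x : ZMod n | (x.cast : ZMod m) = c}.ncard * m = n := by
  have := (castHom h (ZMod m)).toAddMonoidHom.card_fiber_mul_card_eq (castHom_surjective h) c
  rwa [Nat.card_zmod, Nat.card_zmod, Nat.card_coe_set_eq] at this

theorem ZMod.cast_eq_or_eq_neg_of_sq_eq {p k w : ℕ} (hp : p.Prime) {b : ℤ}
    (hb : ¬(p : ℤ) ^ (w + 1) ∣ 4 * b) (hwk : w < k) {y z : ZMod (p ^ k)} (hy : y ^ 2 = b)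
    (hz : z ^ 2 = b) :
    (y.cast : ZMod (p ^ (k - w / 2))) = z.cast ∨ (y.cast : ZMod (p ^ (k - w / 2))) = -z.cast := by
  obtain ⟨Y, rfl⟩ := intCast_surjective y
  obtain ⟨Z, rfl⟩ := intCast_surjective z
  rw [← Int.cast_pow, intCast_eq_intCast_iff_dvd_sub, dvd_sub_comm] at hy hz
  have hdvd : p ^ (k - w / 2) ∣ p ^ k := pow_dvd_pow p (Nat.sub_le k (w / 2))
  rw [cast_intCast hdvd, cast_intCast hdvd, ← Int.cast_neg, intCast_eq_intCast_iff_dvd_sub,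
    intCast_eq_intCast_iff_dvd_sub, dvd_sub_comm, neg_sub_left, dvd_neg]
  push_cast at hy hz ⊢
  exact pow_dvd_sub_or_pow_dvd_add_of_sq_sub_dvd (Nat.prime_iff_prime_int.mp hp) hb hwk hy hz

theorem ZMod.ncard_sq_eq_intCast_le {p k w : ℕ} (hp : p.Prime) {b : ℤ}
    (hb : ¬(p : ℤ) ^ (w + 1) ∣ 4 * b) (hwk : w < k) :
    {y : ZMod (p ^ k) | y ^ 2 = (b : ZMod (p ^ k))}.ncard ≤ 2 * p ^ (w / 2) := by
  have : NeZero (p ^ k) := ⟨pow_ne_zero k hp.ne_zero⟩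
  rcases Set.eq_empty_or_nonempty {y : ZMod (p ^ k) | y ^ 2 = (b : ZMod (p ^ k))}
    with hS | ⟨y₀, hy₀⟩
  · simp [hS]
  have hfiber (c : ZMod (p ^ (k - w / 2))) :
      {x : ZMod (p ^ k) | (x.cast : ZMod (p ^ (k - w / 2))) = c}.ncard = p ^ (w / 2) := by
    have hk : p ^ k = p ^ (w / 2) * p ^ (k - w / 2) := by rw [← pow_add]; congr 1; omega
    exact Nat.eq_of_mul_eq_mul_right (pow_pos hp.pos _)
      ((ncard_cast_fiber_mul (pow_dvd_pow p (Nat.sub_le k (w / 2))) c).trans hk)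
  calc _ ≤ ({x : ZMod (p ^ k) | (x.cast : ZMod (p ^ (k - w / 2))) = y₀.cast} ∪
          {x | (x.cast : ZMod (p ^ (k - w / 2))) = -y₀.cast}).ncard :=
        Set.ncard_le_ncard (fun y hy => cast_eq_or_eq_neg_of_sq_eq hp hb hwk hy hy₀)
    _ ≤ 2 * p ^ (w / 2) := (Set.ncard_union_le _ _).trans (by rw [hfiber, hfiber]; omega)

theorem stmt_15_general (b : ℤ) (hb : b ≠ 0) (p : ℕ) (hp : p.Prime) (k : ℕ) :
    {y : ZMod (p ^ k) | y ^ 2 = (b : ZMod (p ^ k))}.ncard ≤ 8 * b.natAbs := by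
  have h4b : 4 * b ≠ 0 := mul_ne_zero four_ne_zero hb
  set w := padicValInt p (4 * b)
  have hw_le : p ^ w ≤ 4 * b.natAbs := by
    have := Int.natAbs_dvd_natAbs.mpr (padicValInt_dvd (p := p) (4 * b))
    simp only [Int.natAbs_pow, Int.natAbs_natCast, Int.natAbs_mul] at this
    exact Nat.le_of_dvd (by omega) this
  have hw_not : ¬(p : ℤ) ^ (w + 1) ∣ 4 * b := by
    rw [padicValInt_dvd_iff_of_ne_one hp.ne_one]; omega
  rcases le_or_gt k w with hkw | hwk
  · have : NeZero (p ^ k) := ⟨pow_ne_zero k hp.ne_zero⟩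
    calc _ ≤ Nat.card (ZMod (p ^ k)) := Set.ncard_le_card _
      _ = p ^ k := Nat.card_zmod _
      _ ≤ p ^ w := Nat.pow_le_pow_right hp.pos hkw
      _ ≤ 8 * b.natAbs := by omega
  calc _ ≤ 2 * p ^ (w / 2) := ZMod.ncard_sq_eq_intCast_le hp hw_not hwk
    _ ≤ 2 * p ^ w := by gcongr; exacts [hp.one_le, Nat.div_le_self w 2]
    _ ≤ 8 * b.natAbs := by omega

/-- The number of residues `y` modulo `p^k` with `y² ≡ b (mod p^k)`, for a fixed
nonzero integer `b`, is at most `8|b|`, uniformly in the prime power `p^k`. -/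
theorem stmt_15 (b : ℤ) (hb : b ≠ 0) (p : ℕ) (hp : p.Prime) (k : ℕ) (hk : 1 ≤ k) :
    {y : ZMod (p ^ k) | y ^ 2 = (b : ZMod (p ^ k))}.ncard ≤ 8 * b.natAbs :=
  stmt_15_general b hb p hp k
end
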